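/- arXiv:math/0104288 — 3 statements merged into one kernel-verified Lean document; each statement's English description precedes it below -/
import Mathlib

section
/- In U(osp(1|2)) as above, for every natural number n one has G^n F^n = (1/2)^n (tau + H - 1/2)(-tau + H - 3/2)(tau + H - 5/2) ... ((-1)^{n-1} tau + H - (2n-1)/2), the product of n factors of the form (-1)^{j-1} tau + H - (2j-1)/2 for j = 1,...,n. -/
/-- In `U(osp(1|2))`, for every `n : ℕ`,
`Gⁿ Fⁿ = (1/2)ⁿ ∏_{j=1}^{n} ((-1)^{j-1} τ + H - (2j-1)/2)`. -/
theorem stmt9 {A : Type*} [Ring A] [Algebra ℂ A]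
    (F G H : A)
    (h1 : H * F - F * H = -F)
    (h2 : H * G - G * H = G)
    (h3 : G * F + F * G = H)
    (τ : A) (hτ : τ = 2 * (G * F) - H + algebraMap ℂ A (1/2))
    (n : ℕ) :
    G ^ n * F ^ n = (algebraMap ℂ A (1/2)) ^ n *
      ((List.range n).map (fun (j : ℕ) =>
        (-1 : A) ^ j * τ + H - algebraMap ℂ A ((2 * (j : ℂ) + 1) / 2))).prod := by
  set c : A := algebraMap ℂ A (1/2) with hc
  have hcF : ∀ x : A, c * x = x * c := fun x => Algebra.commutes _ _
  have h2c : c + c = 1 := by rw [hc, ← map_add]; norm_num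
  have hcF2 : c * F + F * c = F := by
    rw [hcF, ← mul_add, h2c, mul_one]
  have hτF : τ * F = -(F * τ) := by
    have : τ * F + F * τ = 0 := by
      rw [hτ]
      linear_combination (norm := noncomm_ring) 2 * h3 * F + h1 + hcF2
    linear_combination (norm := noncomm_ring) this
  have hHF : H * F = F * H - F := by linear_combination (norm := noncomm_ring) h1
  have hHFn : ∀ m : ℕ, H * F ^ m = F ^ m * H - (m : A) * F ^ m := by
    intro m
    induction m with
    | zero => simp
    | succ k ih =>
      calc H * F ^ (k + 1) = (H * F ^ k) * F := by rw [pow_succ, mul_assoc]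
        _ = (F ^ k * H - (k : A) * F ^ k) * F := by rw [ih]
        _ = F ^ k * (H * F) - (k : A) * F ^ (k + 1) := by
            rw [pow_succ]; noncomm_ring
        _ = F ^ k * (F * H - F) - (k : A) * F ^ (k + 1) := by rw [hHF]
        _ = F ^ (k + 1) * H - ((k : ℕ) + 1 : A) * F ^ (k + 1) := by
            rw [pow_succ]; noncomm_ring
        _ = F ^ (k + 1) * H - (((k : ℕ) + 1 : ℕ) : A) * F ^ (k + 1) := by push_cast; ring_nf
  have hτFn : ∀ m : ℕ, τ * F ^ m = (-1 : A) ^ m * (F ^ m * τ) := by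
    intro m
    induction m with
    | zero => simp
    | succ k ih =>
      calc τ * F ^ (k + 1) = (τ * F ^ k) * F := by rw [pow_succ, mul_assoc]
        _ = (-1 : A) ^ k * (F ^ k * τ) * F := by rw [ih]
        _ = (-1 : A) ^ k * (F ^ k * (τ * F)) := by rw [mul_assoc, mul_assoc]
        _ = (-1 : A) ^ k * (F ^ k * -(F * τ)) := by rw [hτF]
        _ = (-1 : A) ^ (k + 1) * (F ^ (k + 1) * τ) := by
            rw [pow_succ, pow_succ]; generalize (-1 : A) ^ k = a; noncomm_ring
  have hGF : G * F = c * (τ + H - c) := by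
    have h2' : (2 : A) * (G * F) = τ + H - c := by
      linear_combination (norm := noncomm_ring) -hτ
    have hc2 : c * (2 : A) = 1 := by rw [mul_two, h2c]
    calc G * F = (c * 2) * (G * F) := by rw [hc2, one_mul]
      _ = c * ((2 : A) * (G * F)) := by rw [mul_assoc]
      _ = c * (τ + H - c) := by rw [h2']
  induction n with
  | zero => simp
  | succ n ih =>
    have hneg : (-1 : A) ^ n * (F ^ n * τ) = F ^ n * ((-1 : A) ^ n * τ) := by
      rw [← mul_assoc, ((Commute.neg_one_left (F ^ n)).pow_left n).eq, mul_assoc]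
    have hfact : (τ + H - c) * F ^ n
        = F ^ n * ((-1 : A) ^ n * τ + H - ((n : A) + c)) := by
      have hnat : (n : A) * F ^ n = F ^ n * (n : A) := (Nat.cast_commute n (F ^ n)).eq
      rw [sub_mul, add_mul, hτFn n, hHFn n, hcF (F ^ n), hneg, hnat]
      generalize (-1 : A) ^ n * τ = b
      noncomm_ring
    have hmap : algebraMap ℂ A ((2 * (n : ℂ) + 1) / 2) = (n : A) + c := by
      have : (2 * (n : ℂ) + 1) / 2 = (n : ℂ) + 1/2 := by ring
      rw [this, map_add, map_natCast, hc]
    rw [List.range_succ, List.map_append, List.prod_append, List.map_singleton,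
      List.prod_singleton, hmap]
    set P := ((List.range n).map (fun (j : ℕ) =>
        (-1 : A) ^ j * τ + H - algebraMap ℂ A ((2 * (j : ℂ) + 1) / 2))).prod with hP
    set X := (-1 : A) ^ n * τ + H - ((n : A) + c) with hX
    calc G ^ (n + 1) * F ^ (n + 1)
        = G ^ n * ((G * F) * F ^ n) := by
          rw [pow_succ, pow_succ', mul_assoc, ← mul_assoc G F]
      _ = G ^ n * (c * (F ^ n * X)) := by rw [hGF, mul_assoc c, hfact]
      _ = c * (G ^ n * (F ^ n * X)) := by rw [← mul_assoc, ← hcF (G ^ n), mul_assoc]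
      _ = c * ((c ^ n * P) * X) := by rw [← mul_assoc (G ^ n), ih]
      _ = c ^ (n + 1) * (P * X) := by rw [pow_succ', mul_assoc, mul_assoc]
end

section
/- In U(osp(1|2)) as above with X = G^2, Y = -F^2, one has XY = (1/4)((tau + 1/2)^2 - (H-1)^2) and YX = (1/4)((tau + 1/2)^2 - (H+1)^2), where tau = 2GF - H + 1/2. -/
/-- In `U(osp(1|2))` with `X = G²`, `Y = -F²`:
`XY = (1/4)((τ + 1/2)² - (H-1)²)` and `YX = (1/4)((τ + 1/2)² - (H+1)²)`. -/
theorem stmt12 {A : Type*} [Ring A] [Algebra ℂ A]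
    (F G H : A)
    (h1 : H * F - F * H = -F)
    (h2 : H * G - G * H = G)
    (h3 : G * F + F * G = H)
    (τ : A) (hτ : τ = 2 * (G * F) - H + algebraMap ℂ A (1/2))
    (X Y : A) (hX : X = G ^ 2) (hY : Y = -(F ^ 2)) :
    X * Y = (1/4 : ℂ) • ((τ + algebraMap ℂ A (1/2)) ^ 2 - (H - 1) ^ 2) ∧
    Y * X = (1/4 : ℂ) • ((τ + algebraMap ℂ A (1/2)) ^ 2 - (H + 1) ^ 2) := by
  have half : algebraMap ℂ A (1/2) + algebraMap ℂ A (1/2) = 1 := by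
    rw [← map_add]; norm_num
  have hsum : τ + algebraMap ℂ A (1/2) = 2 * (G * F) - H + 1 := by
    rw [hτ, add_assoc, half]
  have hq : ∀ z : A, (1/4 : ℂ) • ((4 : A) * z) = z := by
    intro z
    rw [show (4 : A) * z = (4 : ℂ) • z by rw [Algebra.smul_def, map_ofNat], smul_smul]
    norm_num
  have key1 : (2 * (G * F) - H + 1) ^ 2 - (H - 1) ^ 2 = 4 * (G ^ 2 * -(F ^ 2)) := by
    linear_combination (norm := noncomm_ring) 4 * (G * h3 * F) - 2 * (h2 * F) + 2 * (G * h1)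
  have key2 : (2 * (G * F) - H + 1) ^ 2 - (H + 1) ^ 2 = 4 * (-(F ^ 2) * G ^ 2) := by
    linear_combination (norm := noncomm_ring) 4 * (F * h3 * G) + 4 * (F * h2) + 4 * h3 +
      4 * (h3 * (G * F)) - 4 * ((F * G) * h3) + 2 * (G * h1) + 2 * (h2 * F)
  constructor
  · rw [hX, hY, hsum, key1, hq]
  · rw [hX, hY, hsum, key2, hq]
end

section
/- In U(osp(1|2)) as above, set U := F and V := (tau - H + 1/2) G, where tau = 2GF - H + 1/2. Then HU - UH = -U, HV - VH = V, and VU - UV = H. Hence U, V, H span a copy of sl(2) inside U(osp(1|2)) (with U, V odd). -/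
/-- In `U(osp(1|2))`, setting `U := F` and `V := (τ - H + 1/2) G`, one has
`HU - UH = -U`, `HV - VH = V`, `VU - UV = H`; so `U, V, H` span a copy of
`sl(2)` inside `U(osp(1|2))`. -/
theorem stmt13 {A : Type*} [Ring A] [Algebra ℂ A]
    (F G H : A)
    (h1 : H * F - F * H = -F)
    (h2 : H * G - G * H = G)
    (h3 : G * F + F * G = H)
    (τ : A) (hτ : τ = 2 * (G * F) - H + algebraMap ℂ A (1/2))
    (U V : A) (hU : U = F) (hV : V = (τ - H + algebraMap ℂ A (1/2)) * G) :
    H * U - U * H = -U ∧ H * V - V * H = V ∧ V * U - U * V = H := by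
  set c : A := algebraMap ℂ A (1/2) with hc
  have h2c : c + c = (1 : A) := by rw [hc, ← map_add]; norm_num
  -- normal ordering rules
  have rFH : F * H = H * F + F := by
    rw [sub_eq_iff_eq_add] at h1; rw [h1]; abel
  have rGH : G * H = H * G - G := by
    rw [sub_eq_iff_eq_add] at h2; rw [h2]; abel
  have rGF : G * F = H - F * G := by
    rw [← h3]; noncomm_ring
  have rFH' : ∀ x : A, F * (H * x) = H * (F * x) + F * x := by
    intro x; rw [← mul_assoc, rFH]; noncomm_ring
  have rGH' : ∀ x : A, G * (H * x) = H * (G * x) - G * x := by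
    intro x; rw [← mul_assoc, rGH]; noncomm_ring
  have rGF' : ∀ x : A, G * (F * x) = H * x - F * (G * x) := by
    intro x; rw [← mul_assoc, rGF]; noncomm_ring
  have hV' : V = G * (F * G) + G * (F * G) - H * G - H * G + G := by
    rw [hV, hτ, show 2 * (G * F) - H + c - H + c = (2 * (G * F) - H - H) + (c + c) from by noncomm_ring, h2c]
    noncomm_ring
  subst hU
  refine ⟨by rw [h1], ?_, ?_⟩
  · rw [hV']
    simp only [mul_add, add_mul, mul_sub, sub_mul, mul_assoc, rFH', rGH', rGF', rFH, rGH, rGF, mul_one, one_mul]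
    noncomm_ring
  · rw [hV']
    simp only [mul_add, add_mul, mul_sub, sub_mul, mul_assoc, rFH', rGH', rGF', rFH, rGH, rGF, mul_one, one_mul]
    noncomm_ring
end
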